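/- Let P be a distribution on ℕ with mean λ/α and finite variance σ², for some λ > 0 and α ∈ (0,1). Then D(T_α(P) ‖ Po(λ)) ≤ α²·(1/(2(1−α)) + σ²/λ). -/

import Mathlib

open scoped BigOperators
open Filter Topology

noncomputable section

/-- A probability mass function on ℕ: nonnegative values summing to 1. -/
def IsPMF (P : ℕ → ℝ) : Prop := (∀ x, 0 ≤ P x) ∧ HasSum P 1

/-- The α-thinning of a distribution `P` on ℕ. -/
def thin (α : ℝ) (P : ℕ → ℝ) (z : ℕ) : ℝ :=
  ∑' x : ℕ, P x * (x.choose z : ℝ) * α ^ z * (1 - α) ^ (x - z)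

/-- The Poisson distribution with parameter λ. -/
def poissonPMF (lam : ℝ) (x : ℕ) : ℝ := Real.exp (-lam) * lam ^ x / x.factorial

/-- Information divergence (natural logarithm, with `0·log 0 = 0`). -/
def klDiv (P Q : ℕ → ℝ) : ℝ := ∑' z : ℕ, P z * Real.log (P z / Q z)

/-!
`T_α(P)` is the `P`-mixture of the binomial laws `Bin(x, α)`, so convexity of `klFun` (Jensen,
pointwise in `z`) gives `D(T_α P ‖ Po λ) ≤ ∑ₓ P(x) D(Bin(x, α) ‖ Po λ)`. Moving the Poisson
parameter to the binomial mean `xα` costs exactly `λ klFun(xα/λ) ≤ (xα - λ)²/λ`, whose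
`P`-average is `α² σ²/λ`. Finally `D(Bin(n, p) ‖ Po(np)) ≤ p²/(2(1-p))`: expanding `log (1 - j/n)`
and `(1-p) log (1-p) + p` in power series, the leading parts of the `m`-th coefficients cancel by
the factorial moments `E[Z^(m+2 falling)] = n^(m+2 falling) p^(m+2)`, and what is left is at most
`p^(m+2)/2` because `n^(m+2) - n^(m+2 falling) ≤ (m+1)(m+2)/2 · n^(m+1)`.
-/

open Finset Real
open InformationTheory (klFun klFun_apply klFun_zero klFun_nonneg)

def binomialPMF (p : ℝ) (n k : ℕ) : ℝ := n.choose k * p ^ k * (1 - p) ^ (n - k)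

lemma thin_eq_tsum_mul_binomialPMF (α : ℝ) (P : ℕ → ℝ) (z : ℕ) :
    thin α P z = ∑' x, P x * binomialPMF α x z := by
  simp only [thin, binomialPMF, mul_assoc]

lemma IsPMF.le_one {P : ℕ → ℝ} (hP : IsPMF P) (z : ℕ) : P z ≤ 1 :=
  le_hasSum hP.2 z fun j _ => hP.1 j

lemma hasSum_tsum_swap_of_nonneg {f : ℕ → ℕ → ℝ} {g : ℕ → ℝ} {a : ℝ} (hf : ∀ x z, 0 ≤ f x z)
    (hg : ∀ x, HasSum (f x) (g x)) (ha : HasSum g a) :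
    Summable (Function.uncurry f) ∧ HasSum (fun z => ∑' x, f x z) a := by
  have hs : Summable (Function.uncurry f) :=
    (summable_prod_of_nonneg fun p => hf p.1 p.2).2
      ⟨fun x => (hg x).summable, ha.summable.congr fun x => ((hg x).tsum_eq).symm⟩
  refine ⟨hs, ?_⟩
  have hcols := ((summable_prod_of_nonneg fun p => hf p.2 p.1).1 hs.prod_symm).2
  convert hcols.hasSum using 1
  rw [hs.tsum_comm, tsum_congr fun x => (hg x).tsum_eq, ha.tsum_eq]

lemma mul_klFun_div {q : ℝ} (hq : q ≠ 0) (t : ℝ) :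
    q * klFun (t / q) = t * log (t / q) + q - t := by
  rw [klFun_apply]; field_simp

lemma klFun_le_sq_sub_one {u : ℝ} (hu : 0 ≤ u) : klFun u ≤ (u - 1) ^ 2 := by
  have : u * log u ≤ u * (u - 1) := by
    rcases hu.eq_or_lt with rfl | hu
    · simp
    · exact mul_le_mul_of_nonneg_left (log_le_sub_one_of_pos hu) hu.le
  rw [klFun_apply]; nlinarith

lemma klFun_add_log_mul_sub_le {a u : ℝ} (ha : 0 < a) (hu : 0 ≤ u) :
    klFun a + log a * (u - a) ≤ klFun u := by
  rcases hu.eq_or_lt with rfl | hu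
  · rw [klFun_zero, klFun_apply]; nlinarith
  · have h := mul_nonneg ha.le (klFun_nonneg (div_nonneg hu.le ha.le))
    rw [mul_klFun_div ha.ne', log_div hu.ne' ha.ne'] at h
    rw [klFun_apply, klFun_apply]; nlinarith

theorem klFun_le_tsum_mul_klFun {w u : ℕ → ℝ} {A : ℝ} (hw : IsPMF w) (hu : ∀ x, 0 ≤ u x)
    (hA : HasSum (fun x => w x * u x) A) (hs : Summable fun x => w x * klFun (u x)) :
    klFun A ≤ ∑' x, w x * klFun (u x) := by
  have hwu : ∀ x, 0 ≤ w x * u x := fun x => mul_nonneg (hw.1 x) (hu x)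
  rcases (hA.nonneg hwu).eq_or_lt with rfl | hA0
  · have hzero := (hasSum_zero_iff_of_nonneg hwu).1 hA
    have : ∀ x, w x * klFun (u x) = w x := fun x => by
      rcases mul_eq_zero.1 (congrFun hzero x) with h | h <;> simp [h, klFun_zero]
    rw [tsum_congr this, hw.2.tsum_eq, klFun_zero]
  · have htangent : HasSum (fun x => w x * (klFun A + log A * (u x - A))) (klFun A) := by
      have h := (hw.2.mul_right (klFun A)).add ((hA.sub (hw.2.mul_right A)).mul_left (log A))
      rw [one_mul, one_mul, sub_self, mul_zero, add_zero] at h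
      exact h.congr_fun fun x => by ring
    exact hasSum_le (fun x => mul_le_mul_of_nonneg_left
      (klFun_add_log_mul_sub_le hA0 (hu x)) (hw.1 x)) htangent hs.hasSum

section KLDiv

variable {P Q : ℕ → ℝ}

lemma hasSum_mul_klFun_div (hP : IsPMF P) (hQ : IsPMF Q) (hQpos : ∀ z, 0 < Q z)
    (hs : Summable fun z => P z * log (P z / Q z)) :
    HasSum (fun z => Q z * klFun (P z / Q z)) (klDiv P Q) := by
  have h := hs.hasSum.add (hQ.2.sub hP.2)
  rw [sub_self, add_zero] at h
  exact h.congr_fun fun z => by rw [mul_klFun_div (hQpos z).ne']; ring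

lemma klDiv_nonneg (hP : IsPMF P) (hQ : IsPMF Q) (hQpos : ∀ z, 0 < Q z)
    (hs : Summable fun z => P z * log (P z / Q z)) : 0 ≤ klDiv P Q :=
  (hasSum_mul_klFun_div hP hQ hQpos hs).nonneg fun z =>
    mul_nonneg (hQpos z).le (klFun_nonneg (div_nonneg (hP.1 z) (hQpos z).le))

theorem klDiv_tsum_mul_le {w : ℕ → ℝ} {R : ℕ → ℕ → ℝ} (hw : IsPMF w) (hR : ∀ x, IsPMF (R x))
    (hQ : IsPMF Q) (hQpos : ∀ z, 0 < Q z)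
    (hRQ : ∀ x, Summable fun z => R x z * log (R x z / Q z))
    (hs : Summable fun x => w x * klDiv (R x) Q) :
    klDiv (fun z => ∑' x, w x * R x z) Q ≤ ∑' x, w x * klDiv (R x) Q := by
  set M : ℕ → ℝ := fun z => ∑' x, w x * R x z
  have hwR : ∀ x z, 0 ≤ w x * R x z := fun x z => mul_nonneg (hw.1 x) ((hR x).1 z)
  have hM : IsPMF M := ⟨fun z => tsum_nonneg (hwR · z),
    (hasSum_tsum_swap_of_nonneg hwR (fun x => (hR x).2.mul_left (w x)) (by simpa using hw.2)).2⟩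
  have hMz : ∀ z, HasSum (fun x => w x * R x z) (M z) := fun z =>
    (Summable.of_nonneg_of_le (hwR · z) (fun x => mul_le_of_le_one_right (hw.1 x)
      ((hR x).le_one z)) hw.2.summable).hasSum
  set F : ℕ → ℕ → ℝ := fun x z => w x * (Q z * klFun (R x z / Q z))
  have hF := hasSum_tsum_swap_of_nonneg (f := F)
    (fun x z => mul_nonneg (hw.1 x) (mul_nonneg (hQpos z).le
      (klFun_nonneg (div_nonneg ((hR x).1 z) (hQpos z).le))))
    (fun x => (hasSum_mul_klFun_div (hR x) hQ hQpos (hRQ x)).mul_left (w x)) hs.hasSum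
  have hjensen : ∀ z, Q z * klFun (M z / Q z) ≤ ∑' x, F x z := by
    intro z
    have hq := hQpos z
    have hcol : Summable fun x => w x * klFun (R x z / Q z) :=
      ((hF.1.prod_symm.prod_factor z).div_const (Q z)).congr fun x => by
        simp only [F, Function.uncurry_apply_pair, Prod.swap_prod_mk]; field_simp
    have h := klFun_le_tsum_mul_klFun hw (fun x => div_nonneg ((hR x).1 z) hq.le)
      (by simpa only [mul_div_assoc] using (hMz z).div_const (Q z)) hcol
    calc Q z * klFun (M z / Q z) ≤ Q z * ∑' x, w x * klFun (R x z / Q z) :=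
          mul_le_mul_of_nonneg_left h hq.le
      _ = ∑' x, F x z := by rw [← tsum_mul_left]; exact tsum_congr fun x => by ring
  have hg : Summable fun z => Q z * klFun (M z / Q z) :=
    Summable.of_nonneg_of_le (fun z => mul_nonneg (hQpos z).le
      (klFun_nonneg (div_nonneg (hM.1 z) (hQpos z).le))) hjensen hF.2.summable
  have hMlog : Summable fun z => M z * log (M z / Q z) :=
    ((hg.sub hQ.2.summable).add hM.2.summable).congr fun z => by
      rw [mul_klFun_div (hQpos z).ne']; ring
  calc klDiv M Q = ∑' z, Q z * klFun (M z / Q z) :=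
        (hasSum_mul_klFun_div hM hQ hQpos hMlog).tsum_eq.symm
    _ ≤ ∑' z, ∑' x, F x z := hg.tsum_le_tsum hjensen hF.2.summable
    _ = ∑' x, w x * klDiv (R x) Q := hF.2.tsum_eq

end KLDiv

lemma poissonPMF_pos {lam : ℝ} (hlam : 0 < lam) (z : ℕ) : 0 < poissonPMF lam z := by
  unfold poissonPMF; positivity

lemma isPMF_poissonPMF {lam : ℝ} (hlam : 0 ≤ lam) : IsPMF (poissonPMF lam) :=
  ⟨fun z => by unfold poissonPMF; positivity,
    ProbabilityTheory.hasSum_one_poissonMeasure ⟨lam, hlam⟩⟩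

lemma log_poissonPMF_div_poissonPMF {μ lam : ℝ} (hμ : 0 < μ) (hlam : 0 < lam) (z : ℕ) :
    log (poissonPMF μ z / poissonPMF lam z) = lam - μ + z * log (μ / lam) := by
  have h : poissonPMF μ z / poissonPMF lam z = exp (lam - μ) * (μ / lam) ^ z := by
    unfold poissonPMF
    rw [div_pow, exp_sub, exp_neg, exp_neg]
    field_simp
  rw [h, log_mul (exp_pos _).ne' (by positivity), log_exp, log_pow]

theorem klDiv_poissonPMF_eq {P : ℕ → ℝ} {μ lam : ℝ} (hP : IsPMF P) (hμ : 0 < μ) (hlam : 0 < lam)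
    (hmean : HasSum (fun z => P z * z) μ)
    (hs : Summable fun z => P z * log (P z / poissonPMF μ z)) :
    klDiv P (poissonPMF lam) = klDiv P (poissonPMF μ) + lam * klFun (μ / lam) := by
  have key : ∀ z, P z * log (P z / poissonPMF lam z) = P z * log (P z / poissonPMF μ z) +
      (P z * (lam - μ) + P z * z * log (μ / lam)) := by
    intro z
    rcases (hP.1 z).eq_or_lt with h | h
    · simp [← h]
    rw [← div_mul_div_cancel₀ (poissonPMF_pos hμ z).ne',
      log_mul (div_pos h (poissonPMF_pos hμ z)).ne'
        (div_pos (poissonPMF_pos hμ z) (poissonPMF_pos hlam z)).ne',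
      log_poissonPMF_div_poissonPMF hμ hlam]
    ring
  have h := hs.hasSum.add ((hP.2.mul_right (lam - μ)).add (hmean.mul_right (log (μ / lam))))
  unfold klDiv
  rw [tsum_congr key, h.tsum_eq, klFun_apply]
  field_simp
  ring

lemma mul_klFun_div_le_sq {μ lam : ℝ} (hμ : 0 ≤ μ) (hlam : 0 < lam) :
    lam * klFun (μ / lam) ≤ (μ - lam) ^ 2 / lam := by
  calc lam * klFun (μ / lam) ≤ lam * (μ / lam - 1) ^ 2 :=
        mul_le_mul_of_nonneg_left (klFun_le_sq_sub_one (by positivity)) hlam.le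
    _ = (μ - lam) ^ 2 / lam := by field_simp

lemma hasSum_sum_log_one_sub {ι : Type*} {s : Finset ι} {t : ι → ℝ} (ht : ∀ j ∈ s, |t j| < 1) :
    HasSum (fun m : ℕ => -∑ j ∈ s, t j ^ (m + 1) / (m + 1)) (∑ j ∈ s, log (1 - t j)) := by
  simpa [sum_neg_distrib] using
    hasSum_sum fun j hj => (Real.hasSum_pow_div_log_of_abs_lt_one (ht j hj)).neg

lemma hasSum_pow_div_mul_add_one_add_two {p : ℝ} (hp : |p| < 1) :
    HasSum (fun m : ℕ => p ^ (m + 2) / ((m + 1) * (m + 2))) ((1 - p) * log (1 - p) + p) := by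
  have h1 := Real.hasSum_pow_div_log_of_abs_lt_one hp
  have h := (h1.mul_left p).sub ((hasSum_nat_add_iff' 1).2 h1)
  rw [sum_range_one, Nat.cast_zero, zero_add, pow_one, zero_add, div_one] at h
  rw [show (1 - p) * log (1 - p) + p = p * -log (1 - p) - (-log (1 - p) - p) by ring]
  exact h.congr_fun fun m => by push_cast; field_simp; ring

lemma descFactorial_mul_choose (n z k : ℕ) (hkz : k ≤ z) :
    z.descFactorial k * n.choose z = n.descFactorial k * (n - k).choose (z - k) := by
  rw [Nat.descFactorial_eq_factorial_mul_choose, Nat.descFactorial_eq_factorial_mul_choose,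
    mul_assoc, mul_comm (z.choose k), Nat.choose_mul hkz, mul_assoc]

lemma sum_range_descFactorial (m : ℕ) :
    ∀ z : ℕ, (m + 1) * ∑ j ∈ range z, j.descFactorial m = z.descFactorial (m + 1)
  | 0 => by simp
  | z + 1 => by
    rw [sum_range_succ, Nat.mul_add, sum_range_descFactorial m z, Nat.succ_descFactorial_succ,
      Nat.descFactorial_succ]
    rcases le_or_gt m z with h | h
    · have e : z - m + (m + 1) = z + 1 := by omega
      rw [← Nat.add_mul, e]
    · rw [Nat.descFactorial_eq_zero_iff_lt.2 h]
      simp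

lemma cast_descFactorial_succ (n k : ℕ) :
    (n.descFactorial (k + 1) : ℝ) = ((n : ℝ) - k) * n.descFactorial k := by
  rcases le_or_gt k n with h | h
  · rw [Nat.descFactorial_succ]
    push_cast [h]
    ring
  · rw [Nat.descFactorial_eq_zero_iff_lt.2 (by omega : n < k + 1),
      Nat.descFactorial_eq_zero_iff_lt.2 h]
    simp

lemma pow_sub_descFactorial_le (n k : ℕ) :
    (n : ℝ) ^ (k + 1) - n.descFactorial (k + 1) ≤ k * (k + 1) / 2 * (n : ℝ) ^ k := by
  induction k with
  | zero => simp
  | succ k ih =>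
    have h1 := mul_le_mul_of_nonneg_left ih (Nat.cast_nonneg n)
    have h2 : ((k : ℝ) + 1) * n.descFactorial (k + 1) ≤ ((k : ℝ) + 1) * (n : ℝ) ^ (k + 1) :=
      mul_le_mul_of_nonneg_left (by exact_mod_cast Nat.descFactorial_le_pow n (k + 1))
        (by positivity)
    rw [cast_descFactorial_succ]
    push_cast
    linear_combination h1 + h2

section Binomial

variable {p : ℝ}

lemma binomialPMF_nonneg (hp0 : 0 ≤ p) (hp1 : p ≤ 1) (n k : ℕ) : 0 ≤ binomialPMF p n k := by
  have : 0 ≤ 1 - p := by linarith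
  unfold binomialPMF; positivity

lemma binomialPMF_eq_zero_of_lt {n k : ℕ} (h : n < k) : binomialPMF p n k = 0 := by
  simp [binomialPMF, Nat.choose_eq_zero_of_lt h]

lemma sum_range_binomialPMF (n : ℕ) : ∑ k ∈ range (n + 1), binomialPMF p n k = 1 := by
  have h := add_pow p (1 - p) n
  rw [add_sub_cancel, one_pow] at h
  rw [h]
  exact sum_congr rfl fun k _ => by unfold binomialPMF; ring

lemma isPMF_binomialPMF (hp0 : 0 ≤ p) (hp1 : p ≤ 1) (n : ℕ) : IsPMF (binomialPMF p n) :=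
  ⟨binomialPMF_nonneg hp0 hp1 n, sum_range_binomialPMF (p := p) n ▸
    hasSum_sum_of_ne_finset_zero fun k hk => binomialPMF_eq_zero_of_lt (by simpa using hk)⟩

lemma hasSum_binomialPMF_mul_log (n : ℕ) (Q : ℕ → ℝ) :
    HasSum (fun z => binomialPMF p n z * log (binomialPMF p n z / Q z))
      (∑ z ∈ range (n + 1), binomialPMF p n z * log (binomialPMF p n z / Q z)) :=
  hasSum_sum_of_ne_finset_zero fun z hz => by
    rw [binomialPMF_eq_zero_of_lt (by simpa using hz), zero_mul]

lemma sum_range_binomialPMF_mul_descFactorial (n k : ℕ) :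
    ∑ z ∈ range (n + 1), binomialPMF p n z * z.descFactorial k = p ^ k * n.descFactorial k := by
  rcases lt_or_ge n k with hnk | hkn
  · rw [Nat.descFactorial_eq_zero_iff_lt.2 hnk, Nat.cast_zero, mul_zero]
    refine sum_eq_zero fun z hz => ?_
    rw [Nat.descFactorial_eq_zero_iff_lt.2 (by simp at hz; omega), Nat.cast_zero, mul_zero]
  have hterm : ∀ w, binomialPMF p n (k + w) * (k + w).descFactorial k =
      p ^ k * n.descFactorial k * binomialPMF p (n - k) w := fun w => by
    have h : ((k + w).descFactorial k : ℝ) * n.choose (k + w) =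
        n.descFactorial k * (n - k).choose w := by
      have := descFactorial_mul_choose n (k + w) k (by omega)
      rw [Nat.add_sub_cancel_left] at this
      exact_mod_cast this
    simp only [binomialPMF, pow_add, Nat.sub_add_eq]
    linear_combination (p ^ k * p ^ w * (1 - p) ^ (n - k - w)) * h
  rw [show n + 1 = k + (n - k + 1) by omega, sum_range_add,
    sum_eq_zero fun z hz => by
      rw [Nat.descFactorial_eq_zero_iff_lt.2 (mem_range.1 hz), Nat.cast_zero, mul_zero],
    zero_add, sum_congr rfl fun w _ => hterm w, ← mul_sum, sum_range_binomialPMF, mul_one]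

lemma sum_range_binomialPMF_mul_self (n : ℕ) :
    ∑ z ∈ range (n + 1), binomialPMF p n z * z = n * p := by
  simpa [mul_comm p] using sum_range_binomialPMF_mul_descFactorial (p := p) n 1

lemma hasSum_binomialPMF_mul_self (n : ℕ) : HasSum (fun z => binomialPMF p n z * z) (n * p) :=
  sum_range_binomialPMF_mul_self (p := p) n ▸ hasSum_sum_of_ne_finset_zero fun z hz => by
    rw [binomialPMF_eq_zero_of_lt (by simpa using hz), zero_mul]

lemma le_sum_binomialPMF_mul_sum_range_pow (hp0 : 0 ≤ p) (hp1 : p ≤ 1) (n m : ℕ) :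
    p ^ (m + 2) * n.descFactorial (m + 2) / (m + 2) ≤
      ∑ z ∈ range (n + 1), binomialPMF p n z * ∑ j ∈ range z, (j : ℝ) ^ (m + 1) := by
  have hz : ∀ z : ℕ,
      (z.descFactorial (m + 2) : ℝ) / (m + 2) ≤ ∑ j ∈ range z, (j : ℝ) ^ (m + 1) := by
    intro z
    have h : ((m : ℝ) + 2) * ∑ j ∈ range z, (j.descFactorial (m + 1) : ℝ) =
        z.descFactorial (m + 2) := by
      exact_mod_cast sum_range_descFactorial (m + 1) z
    rw [← h, mul_div_cancel_left₀ _ (by positivity)]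
    exact sum_le_sum fun j _ => by exact_mod_cast Nat.descFactorial_le_pow j (m + 1)
  calc p ^ (m + 2) * n.descFactorial (m + 2) / (m + 2)
      = ∑ z ∈ range (n + 1), binomialPMF p n z * (z.descFactorial (m + 2) / (m + 2)) := by
        rw [← sum_range_binomialPMF_mul_descFactorial, sum_div]
        simp_rw [mul_div_assoc]
    _ ≤ _ := sum_le_sum fun z _ =>
        mul_le_mul_of_nonneg_left (hz z) (binomialPMF_nonneg hp0 hp1 n z)

/-- The `m`-th term of the expansion of `D(Bin(n,p) ‖ Po(np))` obtained from
`log (1 - j/n) = -∑ₘ (j/n)^(m+1)/(m+1)` and `(1-p) log (1-p) + p = ∑ₘ p^(m+2)/((m+1)(m+2))`. -/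
lemma coeff_klDiv_binomialPMF_poissonPMF_le (hp0 : 0 ≤ p) (hp1 : p ≤ 1) {n : ℕ} (hn : 0 < n)
    (m : ℕ) :
    n * (p ^ (m + 2) / ((m + 1) * (m + 2))) -
        ∑ z ∈ range (n + 1), binomialPMF p n z * ∑ j ∈ range z, ((j : ℝ) / n) ^ (m + 1) / (m + 1)
      ≤ p ^ (m + 2) / 2 := by
  have hn' : (0 : ℝ) < n := by exact_mod_cast hn
  set T := ∑ z ∈ range (n + 1), binomialPMF p n z * ∑ j ∈ range z, (j : ℝ) ^ (m + 1)
  have hsum : ∑ z ∈ range (n + 1), binomialPMF p n z *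
      ∑ j ∈ range z, ((j : ℝ) / n) ^ (m + 1) / (m + 1) = T / ((m + 1) * n ^ (m + 1)) := by
    rw [sum_div]
    refine sum_congr rfl fun z _ => ?_
    rw [mul_div_assoc, sum_div]
    congr 1
    exact sum_congr rfl fun j _ => by rw [div_pow]; field_simp
  have hT : p ^ (m + 2) * n.descFactorial (m + 2) ≤ (m + 2) * T := by
    have := le_sum_binomialPMF_mul_sum_range_pow hp0 hp1 n m
    rw [div_le_iff₀ (by positivity)] at this
    linarith
  have hD := mul_le_mul_of_nonneg_left (pow_sub_descFactorial_le n (m + 1)) (pow_nonneg hp0 (m + 2))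
  rw [hsum, show (n : ℝ) * (p ^ (m + 2) / ((m + 1) * (m + 2))) - T / ((m + 1) * n ^ (m + 1)) =
      (p ^ (m + 2) * n ^ (m + 2) - (m + 2) * T) / ((m + 1) * (m + 2) * n ^ (m + 1)) by
    field_simp; ring, div_le_iff₀ (by positivity)]
  push_cast at hD
  linear_combination hD + hT

lemma binomialPMF_div_poissonPMF (hp : p ≠ 0) {n z : ℕ} (hz : z ≤ n) :
    binomialPMF p n z / poissonPMF (n * p) z =
      (∏ j ∈ range z, (1 - (j : ℝ) / n)) * (1 - p) ^ (n - z) * exp (n * p) := by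
  rcases n.eq_zero_or_pos with rfl | hn
  · obtain rfl : z = 0 := by omega
    simp [binomialPMF, poissonPMF]
  have hn' : (n : ℝ) ≠ 0 := by exact_mod_cast hn.ne'
  have hprod : (n.descFactorial z : ℝ) = n ^ z * ∏ j ∈ range z, (1 - (j : ℝ) / n) := by
    rw [Nat.descFactorial_eq_prod_range, Nat.cast_prod, show (n : ℝ) ^ z = ∏ _j ∈ range z, (n : ℝ)
      by simp, ← prod_mul_distrib]
    refine prod_congr rfl fun j hj => ?_
    have : j ≤ n := by rw [mem_range] at hj; omega
    push_cast [this]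
    field_simp
  have hchoose : (n.choose z : ℝ) = n.descFactorial z / z.factorial := by
    rw [Nat.descFactorial_eq_factorial_mul_choose]
    push_cast
    field_simp
  unfold binomialPMF poissonPMF
  rw [hchoose, hprod, mul_pow, exp_neg]
  field_simp

lemma log_binomialPMF_div_poissonPMF (hp : p ∈ Set.Ioo 0 1) {n z : ℕ} (hz : z ≤ n) :
    log (binomialPMF p n z / poissonPMF (n * p) z) =
      ∑ j ∈ range z, log (1 - (j : ℝ) / n) + (n - z) * log (1 - p) + n * p := by
  have hfactor : ∀ j ∈ range z, 0 < 1 - (j : ℝ) / n := fun j hj => by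
    have hjn : j < n := (mem_range.1 hj).trans_le hz
    rw [sub_pos, div_lt_one (by exact_mod_cast (Nat.zero_le j).trans_lt hjn)]
    exact_mod_cast hjn
  have hq : 0 < 1 - p := by linarith [hp.2]
  rw [binomialPMF_div_poissonPMF hp.1.ne' hz,
    log_mul (mul_pos (prod_pos hfactor) (pow_pos hq _)).ne' (exp_pos _).ne',
    log_mul (prod_pos hfactor).ne' (by positivity), log_prod fun j hj => (hfactor j hj).ne',
    log_pow, log_exp]
  push_cast [hz]
  ring

lemma klDiv_binomialPMF_poissonPMF_mul_eq (hp : p ∈ Set.Ioo 0 1) (n : ℕ) :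
    klDiv (binomialPMF p n) (poissonPMF (n * p)) =
      ∑ z ∈ range (n + 1), binomialPMF p n z * ∑ j ∈ range z, log (1 - (j : ℝ) / n) +
        n * ((1 - p) * log (1 - p) + p) := by
  unfold klDiv
  rw [(hasSum_binomialPMF_mul_log n _).tsum_eq, sum_congr rfl fun z hz => by
    rw [log_binomialPMF_div_poissonPMF hp (Nat.lt_succ_iff.1 (mem_range.1 hz))]]
  have h1 := sum_range_binomialPMF (p := p) n
  have h2 := sum_range_binomialPMF_mul_self (p := p) n
  rw [sum_congr rfl fun z _ => show binomialPMF p n z *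
      (∑ j ∈ range z, log (1 - (j : ℝ) / n) + (n - z) * log (1 - p) + n * p) =
      binomialPMF p n z * ∑ j ∈ range z, log (1 - (j : ℝ) / n) +
        (n * binomialPMF p n z - binomialPMF p n z * z) * log (1 - p) +
        n * p * binomialPMF p n z by ring,
    sum_add_distrib, sum_add_distrib, ← sum_mul, ← mul_sum, sum_sub_distrib, ← mul_sum, h1, h2]
  ring

theorem klDiv_binomialPMF_poissonPMF_mul_le (hp : p ∈ Set.Ioo 0 1) {n : ℕ} (hn : 0 < n) :
    klDiv (binomialPMF p n) (poissonPMF (n * p)) ≤ p ^ 2 / (2 * (1 - p)) := by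
  obtain ⟨hp0, hp1⟩ := hp
  have hn' : (0 : ℝ) < n := by exact_mod_cast hn
  have hlog : HasSum (fun m : ℕ => -∑ z ∈ range (n + 1), binomialPMF p n z *
      ∑ j ∈ range z, ((j : ℝ) / n) ^ (m + 1) / (m + 1))
      (∑ z ∈ range (n + 1), binomialPMF p n z * ∑ j ∈ range z, log (1 - (j : ℝ) / n)) := by
    refine (hasSum_sum fun z hz => (hasSum_sum_log_one_sub fun j hj => ?_).mul_left
      (binomialPMF p n z)).congr_fun fun m => by simp [sum_neg_distrib]
    have hjn : j < n := (mem_range.1 hj).trans_le (Nat.lt_succ_iff.1 (mem_range.1 hz))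
    rw [abs_of_nonneg (by positivity), div_lt_one hn']
    exact_mod_cast hjn
  have hgeom : HasSum (fun m : ℕ => p ^ (m + 2) / 2) (p ^ 2 / (2 * (1 - p))) := by
    have h := (hasSum_geometric_of_lt_one hp0.le hp1).mul_left (p ^ 2 / 2)
    rw [show p ^ 2 / 2 * (1 - p)⁻¹ = p ^ 2 / (2 * (1 - p)) by field_simp] at h
    exact h.congr_fun fun m => by ring
  rw [klDiv_binomialPMF_poissonPMF_mul_eq ⟨hp0, hp1⟩]
  refine hasSum_le (fun m => ?_) (hlog.add
    ((hasSum_pow_div_mul_add_one_add_two (abs_lt.2 ⟨by linarith, hp1⟩)).mul_left (n : ℝ))) hgeom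
  linarith [coeff_klDiv_binomialPMF_poissonPMF_le hp0.le hp1.le hn m]

theorem klDiv_binomialPMF_poissonPMF_le (hp : p ∈ Set.Ioo 0 1) {lam : ℝ} (hlam : 0 < lam)
    (n : ℕ) :
    klDiv (binomialPMF p n) (poissonPMF lam) ≤ p ^ 2 / (2 * (1 - p)) + (n * p - lam) ^ 2 / lam := by
  rcases n.eq_zero_or_pos with rfl | hn
  · have h0 : klDiv (binomialPMF p 0) (poissonPMF lam) = lam := by
      unfold klDiv
      rw [(hasSum_binomialPMF_mul_log 0 _).tsum_eq]
      simp [binomialPMF, poissonPMF]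
    have : 0 ≤ p ^ 2 / (2 * (1 - p)) := div_nonneg (sq_nonneg p) (by linarith [hp.2])
    rw [h0, show (((0 : ℕ) : ℝ) * p - lam) ^ 2 / lam = lam by field_simp; ring]
    linarith
  have hnp : 0 < n * p := mul_pos (by exact_mod_cast hn) hp.1
  rw [klDiv_poissonPMF_eq (isPMF_binomialPMF hp.1.le hp.2.le n) hnp hlam
    (hasSum_binomialPMF_mul_self n) (hasSum_binomialPMF_mul_log n _).summable]
  exact add_le_add (klDiv_binomialPMF_poissonPMF_mul_le hp hn) (mul_klFun_div_le_sq hnp.le hlam)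

end Binomial

theorem klDiv_thin_le_var_general (P : ℕ → ℝ) (hP : IsPMF P) (lam α σ2 : ℝ)
    (hlam : 0 < lam) (hα : α ∈ Set.Ioo (0 : ℝ) 1)
    (hvar : HasSum (fun x : ℕ => P x * ((x : ℝ) - lam / α) ^ 2) σ2) :
    klDiv (thin α P) (poissonPMF lam) ≤ α ^ 2 * (1 / (2 * (1 - α)) + σ2 / lam) := by
  set bound : ℕ → ℝ := fun x => α ^ 2 / (2 * (1 - α)) + (x * α - lam) ^ 2 / lam
  have hbound : HasSum (fun x => P x * bound x) (α ^ 2 * (1 / (2 * (1 - α)) + σ2 / lam)) := by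
    have h := (hP.2.mul_right (α ^ 2 / (2 * (1 - α)))).add (hvar.mul_left (α ^ 2 / lam))
    rw [show 1 * (α ^ 2 / (2 * (1 - α))) + α ^ 2 / lam * σ2 =
      α ^ 2 * (1 / (2 * (1 - α)) + σ2 / lam) by ring] at h
    exact h.congr_fun fun x => by simp only [bound]; field_simp [hα.1.ne']
  have hbin := isPMF_binomialPMF hα.1.le hα.2.le
  have hpo := isPMF_poissonPMF hlam.le
  have hD : ∀ x, P x * klDiv (binomialPMF α x) (poissonPMF lam) ≤ P x * bound x := fun x =>
    mul_le_mul_of_nonneg_left (klDiv_binomialPMF_poissonPMF_le hα hlam x) (hP.1 x)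
  have hD0 : ∀ x, 0 ≤ P x * klDiv (binomialPMF α x) (poissonPMF lam) := fun x =>
    mul_nonneg (hP.1 x) (klDiv_nonneg (hbin x) hpo (poissonPMF_pos hlam)
      (hasSum_binomialPMF_mul_log x _).summable)
  have hDsum := Summable.of_nonneg_of_le hD0 hD hbound.summable
  calc klDiv (thin α P) (poissonPMF lam)
      ≤ ∑' x, P x * klDiv (binomialPMF α x) (poissonPMF lam) := by
        rw [show thin α P = _ from funext (thin_eq_tsum_mul_binomialPMF α P)]
        exact klDiv_tsum_mul_le hP hbin hpo (poissonPMF_pos hlam)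
          (fun x => (hasSum_binomialPMF_mul_log x _).summable) hDsum
    _ ≤ ∑' x, P x * bound x := hDsum.tsum_le_tsum hD hbound.summable
    _ = _ := hbound.tsum_eq

/-- If `P` has mean `λ/α` and variance `σ²`, then
`D(T_α(P)‖Po(λ)) ≤ α²·(1/(2(1−α)) + σ²/λ)`. -/
theorem klDiv_thin_le_var (P : ℕ → ℝ) (hP : IsPMF P) (lam α σ2 : ℝ)
    (hlam : 0 < lam) (hα : α ∈ Set.Ioo (0 : ℝ) 1)
    (hmean : HasSum (fun x : ℕ => P x * (x : ℝ)) (lam / α))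
    (hvar : HasSum (fun x : ℕ => P x * ((x : ℝ) - lam / α) ^ 2) σ2) :
    klDiv (thin α P) (poissonPMF lam) ≤ α ^ 2 * (1 / (2 * (1 - α)) + σ2 / lam) :=
  klDiv_thin_le_var_general P hP lam α σ2 hlam hα hvar
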